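/- For any two density matrices ρ and σ on a finite-dimensional complex Hilbert space with the support of ρ contained in the support of σ, the quantum relative entropy D(ρ‖σ) = Tr(ρ log ρ) − Tr(ρ log σ) is nonnegative, with equality if and only if ρ = σ. -/

import Mathlib

open Matrix Kronecker BigOperators ComplexOrder
noncomputable section

namespace QI

variable {m n : Type*} [Fintype m] [DecidableEq m] [Fintype n] [DecidableEq n]

/-- A density matrix: positive semidefinite with unit trace. -/
def IsDensity (ρ : Matrix n n ℂ) : Prop := ρ.PosSemidef ∧ ρ.trace = 1

/-- Real logarithm extended by `rlog 0 = 0` (functional calculus on the support). -/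
def rlog (x : ℝ) : ℝ := if x = 0 then 0 else Real.log x

/-- Matrix logarithm on the support, via the spectral decomposition of a Hermitian matrix. -/
def matLog (A : Matrix n n ℂ) : Matrix n n ℂ :=
  if h : A.IsHermitian then
    (h.eigenvectorUnitary : Matrix n n ℂ) *
      Matrix.diagonal (fun i => (rlog (h.eigenvalues i) : ℂ)) *
      (star (h.eigenvectorUnitary : Matrix n n ℂ))
  else 0

/-- Von Neumann entropy `H(ρ) = -Tr(ρ log ρ)`. -/
def vnEnt (A : Matrix n n ℂ) : ℝ := -(A * matLog A).trace.re

/-- Quantum relative entropy `D(ρ‖σ) = Tr(ρ log ρ) - Tr(ρ log σ)`. -/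
def relEnt (ρ σ : Matrix n n ℂ) : ℝ := ((ρ * matLog ρ).trace - (ρ * matLog σ).trace).re

/-- Support of `ρ` is contained in the support of `σ` (for PSD matrices: `ker σ ⊆ ker ρ`). -/
def suppLE (ρ σ : Matrix n n ℂ) : Prop := ∀ v : n → ℂ, σ.mulVec v = 0 → ρ.mulVec v = 0

/-- Partial trace over the second (B) factor. -/
def ptraceB (ρ : Matrix (m × n) (m × n) ℂ) : Matrix m m ℂ :=
  Matrix.of fun i j => ∑ k : n, ρ (i, k) (j, k)

/-- Partial trace over the first (A) factor. -/
def ptraceA (ρ : Matrix (m × n) (m × n) ℂ) : Matrix n n ℂ :=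
  Matrix.of fun i j => ∑ k : m, ρ (k, i) (k, j)

/-- Quantum mutual information `I(A;B) = H(A) + H(B) - H(AB)`. -/
def mutInfo (ρ : Matrix (m × n) (m × n) ℂ) : ℝ :=
  vnEnt (ptraceB ρ) + vnEnt (ptraceA ρ) - vnEnt ρ

/-- Rank-one projector `|v⟩⟨v|`. -/
def proj (v : m → ℂ) : Matrix m m ℂ := Matrix.vecMulVec v (star v)

/-- A family of vectors indexed by `m` forming an orthonormal basis of `ℂ^m`. -/
def ONB (v : m → m → ℂ) : Prop :=
  ∀ x y, (star (v x)) ⬝ᵥ (v y) = if x = y then 1 else 0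

/-- Probability of outcome `x` of a projective measurement on the `A` system. -/
def measProb (v : m → m → ℂ) (ρ : Matrix (m × n) (m × n) ℂ) (x : m) : ℝ :=
  ((((proj (v x)) ⊗ₖ (1 : Matrix n n ℂ)) * ρ).trace).re

/-- Conditional state `ρ_x^B` of system `B` given outcome `x` on `A`. -/
def condState (v : m → m → ℂ) (ρ : Matrix (m × n) (m × n) ℂ) (x : m) : Matrix n n ℂ :=
  ((measProb v ρ x)⁻¹ : ℝ) •
    ptraceA (((proj (v x)) ⊗ₖ (1 : Matrix n n ℂ)) * ρ * ((proj (v x)) ⊗ₖ (1 : Matrix n n ℂ)))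

/-- The post-measurement classical-quantum state `σ^{XB} = Σ_x p(x) |x⟩⟨x| ⊗ ρ_x^B`. -/
def cqState (v : m → m → ℂ) (ρ : Matrix (m × n) (m × n) ℂ) : Matrix (m × n) (m × n) ℂ :=
  ∑ x : m, ((measProb v ρ x : ℝ) : ℂ) • ((Matrix.single x x (1 : ℂ)) ⊗ₖ condState v ρ x)

/-- Classical correlations: `max` over projective measurements on `A` of `I(X;B)`. -/
def classCorr (ρ : Matrix (m × n) (m × n) ℂ) : ℝ :=
  sSup { r : ℝ | ∃ v : m → m → ℂ, ONB v ∧ r = mutInfo (cqState v ρ) }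

/-- Quantum discord `D(A;B) = I(A;B) - max I(X;B)`. -/
def discord (ρ : Matrix (m × n) (m × n) ℂ) : ℝ := mutInfo ρ - classCorr ρ

/-- A separable bipartite state: a finite convex combination of product density matrices. -/
def Separable (ρ : Matrix (m × n) (m × n) ℂ) : Prop :=
  ∃ (k : ℕ) (p : Fin k → ℝ) (σA : Fin k → Matrix m m ℂ) (σB : Fin k → Matrix n n ℂ),
    (∀ i, 0 ≤ p i) ∧ (∑ i, p i) = 1 ∧ (∀ i, IsDensity (σA i)) ∧ (∀ i, IsDensity (σB i)) ∧
      ρ = ∑ i, ((p i : ℝ) : ℂ) • ((σA i) ⊗ₖ (σB i))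

end QI

/-!
Diagonalise `ρ = U diag(p) U*` and `σ = V diag(q) V*` and put `W = U* V`. Since `W` is unitary,
`c i j = |W i j|²` is doubly stochastic, so (using `Tr ρ = Tr σ`)
`D(ρ‖σ) = ∑ i j, c i j * (p i log p i - p i log q j - p i + q j)`.
Each bracket is `q j * klFun (p i / q j) ≥ 0` wherever `c i j ≠ 0`: there the support condition
excludes `q j = 0 < p i`. If the sum vanishes then `p i = q j` wherever `W i j ≠ 0`, i.e.
`diag(p) W = W diag(q)`, which says `U* ρ V = U* σ V`.
-/

namespace QI

open Complex InformationTheory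

def kleinTerm (a b : ℝ) : ℝ := a * rlog a - a * rlog b - a + b

lemma kleinTerm_eq_mul_klFun {a b : ℝ} (hab : b = 0 → a = 0) :
    kleinTerm a b = b * klFun (a / b) := by
  rcases eq_or_ne b 0 with rfl | hb
  · simp [kleinTerm, hab rfl]
  rcases eq_or_ne a 0 with rfl | ha
  · simp [kleinTerm, rlog, klFun_zero]
  rw [kleinTerm, klFun_apply, rlog, rlog, if_neg ha, if_neg hb, Real.log_div ha hb]
  field_simp
  ring

lemma kleinTerm_nonneg {a b : ℝ} (ha : 0 ≤ a) (hb : 0 ≤ b) (hab : b = 0 → a = 0) :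
    0 ≤ kleinTerm a b := by
  rw [kleinTerm_eq_mul_klFun hab]
  exact mul_nonneg hb (klFun_nonneg (div_nonneg ha hb))

lemma kleinTerm_eq_zero_iff {a b : ℝ} (ha : 0 ≤ a) (hb : 0 ≤ b) (hab : b = 0 → a = 0) :
    kleinTerm a b = 0 ↔ a = b := by
  rw [kleinTerm_eq_mul_klFun hab, mul_eq_zero, klFun_eq_zero_iff (div_nonneg ha hb)]
  rcases eq_or_ne b 0 with rfl | hb0
  · simp [hab rfl]
  · simp [hb0, div_eq_one_iff_eq hb0]

lemma mul_kleinTerm_nonneg {c a b : ℝ} (hc : 0 ≤ c) (ha : 0 ≤ a) (hb : 0 ≤ b)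
    (hab : c ≠ 0 → b = 0 → a = 0) : 0 ≤ c * kleinTerm a b := by
  rcases eq_or_ne c 0 with rfl | hc0
  · simp
  · exact mul_nonneg hc (kleinTerm_nonneg ha hb (hab hc0))

lemma mul_kleinTerm_eq_zero_iff {c a b : ℝ} (ha : 0 ≤ a) (hb : 0 ≤ b)
    (hab : c ≠ 0 → b = 0 → a = 0) : c * kleinTerm a b = 0 ↔ c = 0 ∨ a = b := by
  rcases eq_or_ne c 0 with rfl | hc0
  · simp
  · simp [hc0, kleinTerm_eq_zero_iff ha hb (hab hc0)]

section DoubleSum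

variable {ι κ : Type*} [Fintype ι] [Fintype κ] {c : ι → κ → ℝ} {a : ι → ℝ} {b : κ → ℝ}

lemma sum_sum_mul_kleinTerm_nonneg (hc : ∀ i j, 0 ≤ c i j) (ha : ∀ i, 0 ≤ a i)
    (hb : ∀ j, 0 ≤ b j) (hab : ∀ i j, c i j ≠ 0 → b j = 0 → a i = 0) :
    0 ≤ ∑ i, ∑ j, c i j * kleinTerm (a i) (b j) :=
  Finset.sum_nonneg fun i _ ↦ Finset.sum_nonneg fun j _ ↦
    mul_kleinTerm_nonneg (hc i j) (ha i) (hb j) (hab i j)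

lemma sum_sum_mul_kleinTerm_eq_zero_iff (hc : ∀ i j, 0 ≤ c i j) (ha : ∀ i, 0 ≤ a i)
    (hb : ∀ j, 0 ≤ b j) (hab : ∀ i j, c i j ≠ 0 → b j = 0 → a i = 0) :
    ∑ i, ∑ j, c i j * kleinTerm (a i) (b j) = 0 ↔ ∀ i j, c i j = 0 ∨ a i = b j := by
  have hterm i j := mul_kleinTerm_nonneg (hc i j) (ha i) (hb j) (hab i j)
  rw [Fintype.sum_eq_zero_iff_of_nonneg fun i ↦ Finset.sum_nonneg fun j _ ↦ hterm i j, funext_iff]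
  refine forall_congr' fun i ↦ ?_
  rw [Pi.zero_apply, Fintype.sum_eq_zero_iff_of_nonneg (hterm i), funext_iff]
  exact forall_congr' fun j ↦ mul_kleinTerm_eq_zero_iff (ha i) (hb j) (hab i j)

end DoubleSum

section Spectral

variable {n : Type*} [Fintype n] [DecidableEq n] {W : Matrix n n ℂ}

lemma sum_normSq_apply_row (hW : W ∈ unitaryGroup n ℂ) (i : n) : ∑ j, normSq (W i j) = 1 := by
  have h : (W * star W) i i = (1 : Matrix n n ℂ) i i := by rw [Unitary.mul_star_self_of_mem hW]
  simp only [mul_apply, star_apply, RCLike.star_def, mul_conj, one_apply_eq] at h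
  exact_mod_cast h

lemma sum_normSq_apply_col (hW : W ∈ unitaryGroup n ℂ) (j : n) : ∑ i, normSq (W i j) = 1 := by
  have h : (star W * W) j j = (1 : Matrix n n ℂ) j j := by rw [Unitary.star_mul_self_of_mem hW]
  simp only [mul_apply, star_apply, RCLike.star_def, ← normSq_eq_conj_mul_self,
    one_apply_eq] at h
  exact_mod_cast h

lemma sum_sum_normSq_mul_left (hW : W ∈ unitaryGroup n ℂ) (f : n → ℝ) :
    ∑ i, ∑ j, normSq (W i j) * f i = ∑ i, f i := by
  simp only [← Finset.sum_mul, sum_normSq_apply_row hW, one_mul]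

lemma sum_sum_normSq_mul_right (hW : W ∈ unitaryGroup n ℂ) (g : n → ℝ) :
    ∑ i, ∑ j, normSq (W i j) * g j = ∑ j, g j := by
  rw [Finset.sum_comm]
  simp only [← Finset.sum_mul, sum_normSq_apply_col hW, one_mul]

lemma trace_diagonal_mul_mul_diagonal_mul_star (M : Matrix n n ℂ) (d e : n → ℝ) :
    (diagonal (fun i ↦ (d i : ℂ)) * M * diagonal (fun j ↦ (e j : ℂ)) * star M).trace =
      ∑ i, ∑ j, d i * e j * normSq (M i j) := by
  simp only [trace, diag_apply, mul_apply (N := star M), mul_diagonal, diagonal_mul, star_apply,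
    RCLike.star_def]
  push_cast
  refine Finset.sum_congr rfl fun i _ ↦ Finset.sum_congr rfl fun j _ ↦ ?_
  rw [← mul_conj]
  ring

lemma trace_conj_diagonal_mul_conj_diagonal (U V : Matrix n n ℂ) (d e : n → ℝ) :
    ((U * diagonal (fun i ↦ (d i : ℂ)) * star U) *
      (V * diagonal (fun j ↦ (e j : ℂ)) * star V)).trace =
      ∑ i, ∑ j, d i * e j * normSq ((star U * V) i j) := by
  rw [← trace_diagonal_mul_mul_diagonal_mul_star, star_mul, star_star]
  simp only [Matrix.mul_assoc]
  rw [trace_mul_comm]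
  simp only [Matrix.mul_assoc]

variable {A B : Matrix n n ℂ}

lemma _root_.Matrix.IsHermitian.eq_conj_diagonal (hA : A.IsHermitian) :
    A = hA.eigenvectorUnitary * diagonal (fun i ↦ (hA.eigenvalues i : ℂ)) *
      star (hA.eigenvectorUnitary : Matrix n n ℂ) :=
  hA.spectral_theorem

lemma _root_.Matrix.IsHermitian.star_eigenvectorUnitary_mul (hA : A.IsHermitian) :
    star (hA.eigenvectorUnitary : Matrix n n ℂ) * A =
      diagonal (fun i ↦ (hA.eigenvalues i : ℂ)) * star (hA.eigenvectorUnitary : Matrix n n ℂ) := by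
  calc _ = star (hA.eigenvectorUnitary : Matrix n n ℂ) * (hA.eigenvectorUnitary *
        diagonal (fun i ↦ (hA.eigenvalues i : ℂ)) * star (hA.eigenvectorUnitary : Matrix n n ℂ)) :=
        congrArg _ hA.eq_conj_diagonal
    _ = _ := by
      rw [← Matrix.mul_assoc, ← Matrix.mul_assoc,
        Unitary.star_mul_self_of_mem hA.eigenvectorUnitary.2, Matrix.one_mul]

lemma _root_.Matrix.IsHermitian.mul_eigenvectorUnitary (hA : A.IsHermitian) :
    A * hA.eigenvectorUnitary =
      hA.eigenvectorUnitary * diagonal (fun i ↦ (hA.eigenvalues i : ℂ)) := by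
  calc _ = hA.eigenvectorUnitary * diagonal (fun i ↦ (hA.eigenvalues i : ℂ)) *
        star (hA.eigenvectorUnitary : Matrix n n ℂ) * hA.eigenvectorUnitary :=
        congrArg (· * _) hA.eq_conj_diagonal
    _ = _ := by
      rw [Matrix.mul_assoc, Unitary.star_mul_self_of_mem hA.eigenvectorUnitary.2, Matrix.mul_one]

lemma _root_.Matrix.IsHermitian.matLog_eq (hA : A.IsHermitian) :
    matLog A = hA.eigenvectorUnitary * diagonal (fun i ↦ (rlog (hA.eigenvalues i) : ℂ)) *
      star (hA.eigenvectorUnitary : Matrix n n ℂ) :=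
  dif_pos hA

def eigenOverlap (hA : A.IsHermitian) (hB : B.IsHermitian) : Matrix n n ℂ :=
  star (hA.eigenvectorUnitary : Matrix n n ℂ) * hB.eigenvectorUnitary

lemma eigenOverlap_mem_unitaryGroup (hA : A.IsHermitian) (hB : B.IsHermitian) :
    eigenOverlap hA hB ∈ unitaryGroup n ℂ :=
  (star hA.eigenvectorUnitary * hB.eigenvectorUnitary).2

lemma star_eigenvectorUnitary_mul_mul_eq_diagonal_mul_eigenOverlap (hA : A.IsHermitian)
    (hB : B.IsHermitian) :
    star (hA.eigenvectorUnitary : Matrix n n ℂ) * A * hB.eigenvectorUnitary =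
      diagonal (fun i ↦ (hA.eigenvalues i : ℂ)) * eigenOverlap hA hB := by
  rw [hA.star_eigenvectorUnitary_mul, eigenOverlap, Matrix.mul_assoc]

lemma star_eigenvectorUnitary_mul_mul_eq_eigenOverlap_mul_diagonal (hA : A.IsHermitian)
    (hB : B.IsHermitian) :
    star (hA.eigenvectorUnitary : Matrix n n ℂ) * B * hB.eigenvectorUnitary =
      eigenOverlap hA hB * diagonal (fun j ↦ (hB.eigenvalues j : ℂ)) := by
  rw [Matrix.mul_assoc, hB.mul_eigenvectorUnitary, eigenOverlap, Matrix.mul_assoc]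

lemma eigenOverlap_self (hA : A.IsHermitian) : eigenOverlap hA hA = 1 :=
  Unitary.star_mul_self_of_mem hA.eigenvectorUnitary.2

lemma trace_mul_matLog (hA : A.IsHermitian) (hB : B.IsHermitian) :
    (A * matLog B).trace = ∑ i, ∑ j, hA.eigenvalues i * rlog (hB.eigenvalues j) *
      normSq (eigenOverlap hA hB i j) := by
  rw [hB.matLog_eq]
  conv_lhs => arg 1; arg 1; rw [hA.eq_conj_diagonal]
  exact trace_conj_diagonal_mul_conj_diagonal _ _ _ _

lemma trace_mul_matLog_self (hA : A.IsHermitian) :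
    (A * matLog A).trace = ∑ i, hA.eigenvalues i * rlog (hA.eigenvalues i) := by
  rw [trace_mul_matLog hA hA, eigenOverlap_self]
  simp [one_apply, apply_ite]

theorem relEnt_eq_sum_sum_normSq_eigenOverlap_mul_kleinTerm (hA : A.IsHermitian)
    (hB : B.IsHermitian) (htr : A.trace = B.trace) :
    relEnt A B = ∑ i, ∑ j, normSq (eigenOverlap hA hB i j) *
      kleinTerm (hA.eigenvalues i) (hB.eigenvalues j) := by
  have hpq : ∑ i, hA.eigenvalues i = ∑ j, hB.eigenvalues j := by
    exact_mod_cast hA.trace_eq_sum_eigenvalues.symm.trans (htr.trans hB.trace_eq_sum_eigenvalues)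
  have hW := eigenOverlap_mem_unitaryGroup hA hB
  rw [relEnt, trace_mul_matLog_self hA, trace_mul_matLog hA hB, ← ofReal_sub, ofReal_re]
  simp only [kleinTerm, mul_sub, mul_add, Finset.sum_add_distrib, Finset.sum_sub_distrib,
    sum_sum_normSq_mul_left hW, sum_sum_normSq_mul_right hW, hpq]
  simp only [mul_comm (normSq _)]
  ring

lemma suppLE.eigenvalues_eq_zero (h : suppLE A B) (hA : A.IsHermitian) (hB : B.IsHermitian)
    (i j : n) (hW : normSq (eigenOverlap hA hB i j) ≠ 0) (hq : hB.eigenvalues j = 0) :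
    hA.eigenvalues i = 0 := by
  have hBv : B *ᵥ ⇑(hB.eigenvectorBasis j) = 0 := by
    rw [hB.mulVec_eigenvectorBasis, hq, zero_smul]
  have hpW : (hA.eigenvalues i : ℂ) * eigenOverlap hA hB i j = 0 :=
    calc _ = (star (hA.eigenvectorUnitary : Matrix n n ℂ) * A * hB.eigenvectorUnitary) i j := by
          rw [star_eigenvectorUnitary_mul_mul_eq_diagonal_mul_eigenOverlap, diagonal_mul]
      _ = (star (hA.eigenvectorUnitary : Matrix n n ℂ) *ᵥ (A *ᵥ ⇑(hB.eigenvectorBasis j))) i := by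
          rw [mulVec_mulVec]; rfl
      _ = 0 := by rw [h _ hBv, mulVec_zero]; rfl
  simpa [normSq_eq_zero.not.mp hW] using hpW

lemma eq_of_forall_normSq_eigenOverlap_eq_zero_or (hA : A.IsHermitian) (hB : B.IsHermitian)
    (h : ∀ i j, normSq (eigenOverlap hA hB i j) = 0 ∨ hA.eigenvalues i = hB.eigenvalues j) :
    A = B := by
  have hcomm : diagonal (fun i ↦ (hA.eigenvalues i : ℂ)) * eigenOverlap hA hB =
      eigenOverlap hA hB * diagonal (fun j ↦ (hB.eigenvalues j : ℂ)) := by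
    ext i j
    rw [diagonal_mul, mul_diagonal]
    rcases h i j with hW | hpq
    · rw [normSq_eq_zero.mp hW, mul_zero, zero_mul]
    · rw [hpq, mul_comm]
  have hUA := Unitary.mul_star_self_of_mem hA.eigenvectorUnitary.2
  have hUB := Unitary.mul_star_self_of_mem hB.eigenvectorUnitary.2
  have hconj : ∀ X : Matrix n n ℂ, X = hA.eigenvectorUnitary *
      (star (hA.eigenvectorUnitary : Matrix n n ℂ) * X * hB.eigenvectorUnitary) *
      star (hB.eigenvectorUnitary : Matrix n n ℂ) := fun X ↦ by
    rw [← Matrix.mul_assoc, ← Matrix.mul_assoc, hUA, Matrix.one_mul, Matrix.mul_assoc, hUB,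
      Matrix.mul_one]
  refine (hconj A).trans (Eq.trans ?_ (hconj B).symm)
  rw [star_eigenvectorUnitary_mul_mul_eq_diagonal_mul_eigenOverlap,
    star_eigenvectorUnitary_mul_mul_eq_eigenOverlap_mul_diagonal, hcomm]

end Spectral

end QI

open QI Matrix Kronecker in
/-- nonnegativity and faithfulness of quantum relative entropy. -/
theorem relEnt_nonneg_and_eq_zero_iff {n : Type*} [Fintype n] [DecidableEq n]
    (ρ σ : Matrix n n ℂ) (hρ : IsDensity ρ) (hσ : IsDensity σ) (hsupp : suppLE ρ σ) :
    0 ≤ relEnt ρ σ ∧ (relEnt ρ σ = 0 ↔ ρ = σ) := by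
  obtain ⟨hρpsd, hρtr⟩ := hρ
  obtain ⟨hσpsd, hσtr⟩ := hσ
  have hsum := relEnt_eq_sum_sum_normSq_eigenOverlap_mul_kleinTerm hρpsd.1 hσpsd.1
    (hρtr.trans hσtr.symm)
  have hc := fun i j ↦ Complex.normSq_nonneg (eigenOverlap hρpsd.1 hσpsd.1 i j)
  have hker := hsupp.eigenvalues_eq_zero hρpsd.1 hσpsd.1
  refine ⟨hsum ▸ sum_sum_mul_kleinTerm_nonneg hc hρpsd.eigenvalues_nonneg
    hσpsd.eigenvalues_nonneg hker, fun h0 ↦ ?_, fun h ↦ by simp [h, relEnt]⟩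
  rw [hsum, sum_sum_mul_kleinTerm_eq_zero_iff hc hρpsd.eigenvalues_nonneg
    hσpsd.eigenvalues_nonneg hker] at h0
  exact eq_of_forall_normSq_eigenOverlap_eq_zero_or hρpsd.1 hσpsd.1 h0
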